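/- Let d ≥ 1, let A be an invertible d×d real matrix and b ∈ ℝ^d, and define ρ_{A,b}(x) = π^{−d/2}·|det A|^{−1}·exp(−|A^{−1}(x − b)|²) for x ∈ ℝ^d. Then the total potential energy of the quantum harmonic oscillator at ρ_{A,b} satisfies ∫_{ℝ^d} (|x|²/2)·ρ_{A,b}(x) dx + (1/8)·∫_{ℝ^d} |∇ log ρ_{A,b}(x)|²·ρ_{A,b}(x) dx = (1/4)·Tr(AᵀA + (A·Aᵀ)^{−1}) + (1/2)·bᵀb. -/

import Mathlib

/-!
Since `ρ_{A,b}` is the pushforward of the Gaussian `π^{-d/2} e^{-|z|²}` under `z ↦ Az + b`, the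
substitution `x = Az + b` turns both integrals into Gaussian expectations in `z`, with
`∇ log ρ_{A,b}(Az + b) = -2 A⁻ᵀ z`. The Gaussian has mean `0` and covariance `I/2` (its moments
factor over the coordinates by Fubini), so `E|Mz + c|² = Tr(MᵀM)/2 + |c|²`. With `(M, c) = (A, b)`
and `(M, c) = (A⁻ᵀ, 0)` this gives `Tr(AᵀA)/4 + |b|²/2` and `Tr(A⁻¹A⁻ᵀ)/4 = Tr((AAᵀ)⁻¹)/4`.
-/

open Matrix MeasureTheory
open scoped BigOperators

/-- The density of the pushforward of the reference Gaussian `π^{−d/2}e^{−|z|²}` under the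
affine map `z ↦ Az + b`: `ρ_{A,b}(x) = π^{−d/2}|det A|⁻¹ exp(−|A⁻¹(x−b)|²)`. -/
noncomputable def ρAb {d : ℕ} (A : Matrix (Fin d) (Fin d) ℝ) (b : Fin d → ℝ)
    (x : Fin d → ℝ) : ℝ :=
  Real.pi ^ (-(d : ℝ) / 2) * |A.det|⁻¹ * Real.exp (-∑ i, (A⁻¹.mulVec (x - b)) i ^ 2)

open Real Finset

theorem integrable_pow_mul_exp_neg_sq (n : ℕ) :
    Integrable fun x : ℝ => x ^ n * exp (-x ^ 2) := by
  simpa [rpow_natCast] using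
    integrable_rpow_mul_exp_neg_mul_sq one_pos (neg_one_lt_zero.trans_le n.cast_nonneg)

theorem integral_exp_neg_sq : ∫ x : ℝ, exp (-x ^ 2) = √π := by
  simpa using integral_gaussian 1

theorem integral_mul_exp_neg_sq : ∫ x : ℝ, x * exp (-x ^ 2) = 0 := by
  have h := integral_neg_eq_self (fun x : ℝ => x * exp (-x ^ 2)) volume
  simp only [neg_sq, neg_mul, integral_neg] at h
  linarith

theorem integral_sq_mul_exp_neg_sq : ∫ x : ℝ, x ^ 2 * exp (-x ^ 2) = √π / 2 := by
  have hv (x : ℝ) : HasDerivAt (fun x => -exp (-x ^ 2) / 2) (x * exp (-x ^ 2)) x := by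
    have := ((hasDerivAt_pow 2 x).fun_neg.exp.fun_neg.div_const 2)
    exact this.congr_deriv (by push_cast; ring)
  have h := integral_mul_deriv_eq_deriv_mul_of_integrable (u := id) (u' := fun _ => 1)
    (fun x _ => hasDerivAt_id x) (fun x _ => hv x) ?_ ?_ ?_
  · simp only [id, one_mul, integral_div, integral_neg, integral_exp_neg_sq] at h
    rw [neg_div, neg_neg] at h
    rw [← h]; congr 1; ext x; ring
  · exact (integrable_pow_mul_exp_neg_sq 2).congr (.of_forall fun x => by simp; ring)
  · exact ((integrable_pow_mul_exp_neg_sq 0).neg.div_const 2).congr (.of_forall fun x => by simp)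
  · exact ((integrable_pow_mul_exp_neg_sq 1).neg.div_const 2).congr
      (.of_forall fun x => by simp; ring)

section GaussianMoments

variable {ι : Type*} [Fintype ι]

theorem prod_pow_mul_exp_neg_sum_sq (p : ι → ℕ) (z : ι → ℝ) :
    (∏ i, z i ^ p i) * exp (-∑ i, z i ^ 2) = ∏ i, z i ^ p i * exp (-z i ^ 2) := by
  rw [← sum_neg_distrib, exp_sum, prod_mul_distrib]

theorem integrable_prod_pow_mul_exp_neg_sum_sq (p : ι → ℕ) :
    Integrable fun z : ι → ℝ => (∏ i, z i ^ p i) * exp (-∑ i, z i ^ 2) := by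
  simp_rw [prod_pow_mul_exp_neg_sum_sq]
  exact Integrable.fintype_prod fun i => integrable_pow_mul_exp_neg_sq (p i)

theorem integral_prod_pow_mul_exp_neg_sum_sq (p : ι → ℕ) :
    ∫ z : ι → ℝ, (∏ i, z i ^ p i) * exp (-∑ i, z i ^ 2)
      = ∏ i, ∫ x : ℝ, x ^ p i * exp (-x ^ 2) := by
  simp_rw [prod_pow_mul_exp_neg_sum_sq]
  exact integral_fintype_prod_volume_eq_prod fun i x => x ^ p i * exp (-x ^ 2)

theorem integrable_exp_neg_sum_sq : Integrable fun z : ι → ℝ => exp (-∑ i, z i ^ 2) := by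
  simpa using integrable_prod_pow_mul_exp_neg_sum_sq (ι := ι) 0

theorem integral_exp_neg_sum_sq : ∫ z : ι → ℝ, exp (-∑ i, z i ^ 2) = √π ^ Fintype.card ι := by
  simpa [integral_exp_neg_sq] using integral_prod_pow_mul_exp_neg_sum_sq (ι := ι) 0

theorem prod_pow_single [DecidableEq ι] (z : ι → ℝ) (j : ι) (n : ℕ) :
    ∏ i, z i ^ (Pi.single j n : ι → ℕ) i = z j ^ n :=
  (Fintype.prod_eq_single j fun i hi => by simp [hi]).trans (by simp)

theorem integrable_apply_mul_exp_neg_sum_sq (j : ι) :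
    Integrable fun z : ι → ℝ => z j * exp (-∑ i, z i ^ 2) := by
  classical
  simpa [prod_pow_single] using integrable_prod_pow_mul_exp_neg_sum_sq (Pi.single j 1 : ι → ℕ)

theorem integral_apply_mul_exp_neg_sum_sq (j : ι) :
    ∫ z : ι → ℝ, z j * exp (-∑ i, z i ^ 2) = 0 := by
  classical
  have h := integral_prod_pow_mul_exp_neg_sum_sq (Pi.single j 1 : ι → ℕ)
  simp only [prod_pow_single, pow_one] at h
  rw [h]
  exact prod_eq_zero (mem_univ j) (by simpa using integral_mul_exp_neg_sq)

theorem apply_mul_apply_eq_prod_pow [DecidableEq ι] (z : ι → ℝ) (j k : ι) :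
    z j * z k = ∏ i, z i ^ (Pi.single j 1 + Pi.single k 1 : ι → ℕ) i := by
  simp only [Pi.add_apply, pow_add, prod_mul_distrib, prod_pow_single, pow_one]

theorem integrable_apply_mul_apply_mul_exp_neg_sum_sq (j k : ι) :
    Integrable fun z : ι → ℝ => z j * z k * exp (-∑ i, z i ^ 2) := by
  classical
  simpa only [apply_mul_apply_eq_prod_pow] using integrable_prod_pow_mul_exp_neg_sum_sq _

theorem integral_apply_mul_apply_mul_exp_neg_sum_sq [DecidableEq ι] (j k : ι) :
    ∫ z : ι → ℝ, z j * z k * exp (-∑ i, z i ^ 2)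
      = if j = k then √π ^ Fintype.card ι / 2 else 0 := by
  simp only [apply_mul_apply_eq_prod_pow, integral_prod_pow_mul_exp_neg_sum_sq]
  split_ifs with hjk
  · subst hjk
    set p : ι → ℕ := Pi.single j 1 + Pi.single j 1
    have hj : ∫ x : ℝ, x ^ p j * exp (-x ^ 2) = √π / 2 := by
      simpa [p] using integral_sq_mul_exp_neg_sq
    have hrest : ∏ i ∈ {j}ᶜ, ∫ x : ℝ, x ^ p i * exp (-x ^ 2) = ∏ i ∈ ({j}ᶜ : Finset ι), √π :=
      prod_congr rfl fun i hi => by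
        simpa [p, Pi.single_apply, by simpa using hi] using integral_exp_neg_sq
    calc _ = √π / 2 * ∏ i ∈ ({j}ᶜ : Finset ι), √π := by
          rw [Fintype.prod_eq_mul_prod_compl j, hj, hrest]
      _ = (∏ _i : ι, √π) / 2 := by rw [Fintype.prod_eq_mul_prod_compl j]; ring
      _ = √π ^ Fintype.card ι / 2 := by rw [prod_const, card_univ]
  · refine prod_eq_zero (mem_univ j) ?_
    simpa [Pi.single_apply, Ne.symm hjk] using integral_mul_exp_neg_sq

theorem dotProduct_mul_eq_sum (v z : ι → ℝ) (a : ℝ) :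
    (v ⬝ᵥ z) * a = ∑ j, v j * (z j * a) := by
  simp only [dotProduct, sum_mul, mul_assoc]

theorem dotProduct_mulVec_mul_eq_sum (S : Matrix ι ι ℝ) (z : ι → ℝ) (a : ℝ) :
    (z ⬝ᵥ S *ᵥ z) * a = ∑ j, ∑ k, S j k * (z j * z k * a) := by
  simp only [dotProduct, mulVec, mul_sum, sum_mul]
  exact sum_congr rfl fun j _ => sum_congr rfl fun k _ => by ring

theorem integrable_dotProduct_mul_exp_neg_sum_sq (v : ι → ℝ) :
    Integrable fun z : ι → ℝ => (v ⬝ᵥ z) * exp (-∑ i, z i ^ 2) := by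
  simp_rw [dotProduct_mul_eq_sum]
  exact integrable_finsetSum _ fun j _ => (integrable_apply_mul_exp_neg_sum_sq j).const_mul _

theorem integral_dotProduct_mul_exp_neg_sum_sq (v : ι → ℝ) :
    ∫ z : ι → ℝ, (v ⬝ᵥ z) * exp (-∑ i, z i ^ 2) = 0 := by
  simp_rw [dotProduct_mul_eq_sum]
  rw [integral_finsetSum _ fun j _ => (integrable_apply_mul_exp_neg_sum_sq j).const_mul (v j)]
  simp [integral_const_mul, integral_apply_mul_exp_neg_sum_sq]

theorem integrable_dotProduct_mulVec_mul_exp_neg_sum_sq (S : Matrix ι ι ℝ) :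
    Integrable fun z : ι → ℝ => (z ⬝ᵥ S *ᵥ z) * exp (-∑ i, z i ^ 2) := by
  simp_rw [dotProduct_mulVec_mul_eq_sum]
  exact integrable_finsetSum _ fun j _ => integrable_finsetSum _ fun k _ =>
    (integrable_apply_mul_apply_mul_exp_neg_sum_sq j k).const_mul (S j k)

theorem integral_dotProduct_mulVec_mul_exp_neg_sum_sq (S : Matrix ι ι ℝ) :
    ∫ z : ι → ℝ, (z ⬝ᵥ S *ᵥ z) * exp (-∑ i, z i ^ 2) = S.trace / 2 * √π ^ Fintype.card ι := by
  classical
  have hint (j k : ι) : Integrable fun z : ι → ℝ => S j k * (z j * z k * exp (-∑ i, z i ^ 2)) :=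
    (integrable_apply_mul_apply_mul_exp_neg_sum_sq j k).const_mul _
  simp_rw [dotProduct_mulVec_mul_eq_sum]
  rw [integral_finsetSum _ fun j _ => integrable_finsetSum _ fun k _ => hint j k]
  simp_rw [integral_finsetSum _ fun k _ => hint _ k, integral_const_mul,
    integral_apply_mul_apply_mul_exp_neg_sum_sq, mul_ite, mul_zero, sum_ite_eq, mem_univ, if_true,
    ← sum_mul, Matrix.trace, Matrix.diag]
  ring

theorem sum_sq_mulVec_add {κ : Type*} [Fintype κ] (M : Matrix κ ι ℝ) (c : κ → ℝ) (z : ι → ℝ) :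
    ∑ i, (M *ᵥ z + c) i ^ 2 = z ⬝ᵥ (Mᵀ * M) *ᵥ z + 2 * ((c ᵥ* M) ⬝ᵥ z) + c ⬝ᵥ c := by
  have hsq (w : κ → ℝ) : ∑ i, w i ^ 2 = w ⬝ᵥ w := by simp [dotProduct, sq]
  rw [hsq, ← mulVec_mulVec, dotProduct_mulVec, vecMul_transpose, ← dotProduct_mulVec,
    add_dotProduct, dotProduct_add, dotProduct_add, dotProduct_comm (M *ᵥ z) c]
  ring

theorem integral_sum_sq_mulVec_add_mul_exp_neg_sum_sq {κ : Type*} [Fintype κ]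
    (M : Matrix κ ι ℝ) (c : κ → ℝ) :
    ∫ z : ι → ℝ, (∑ i, (M *ᵥ z + c) i ^ 2) * exp (-∑ i, z i ^ 2)
      = ((Mᵀ * M).trace / 2 + c ⬝ᵥ c) * √π ^ Fintype.card ι := by
  simp_rw [sum_sq_mulVec_add, add_mul, mul_assoc (2 : ℝ)]
  rw [integral_add ((integrable_dotProduct_mulVec_mul_exp_neg_sum_sq _).fun_add
      ((integrable_dotProduct_mul_exp_neg_sum_sq _).const_mul 2))
      ((integrable_exp_neg_sum_sq).const_mul _),
    integral_add (integrable_dotProduct_mulVec_mul_exp_neg_sum_sq _)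
      ((integrable_dotProduct_mul_exp_neg_sum_sq _).const_mul 2),
    integral_const_mul, integral_const_mul, integral_dotProduct_mulVec_mul_exp_neg_sum_sq,
    integral_dotProduct_mul_exp_neg_sum_sq, integral_exp_neg_sum_sq]
  ring

end GaussianMoments

section AffineMaps

variable {ι κ : Type*} [Fintype ι] [Fintype κ]

theorem fderiv_sum_sq_mulVec_sub_apply (M : Matrix κ ι ℝ) (b x v : ι → ℝ) :
    fderiv ℝ (fun y => ∑ j, (M *ᵥ (y - b)) j ^ 2) x v = 2 * (M *ᵥ (x - b)) ⬝ᵥ (M *ᵥ v) := by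
  let L : (ι → ℝ) →L[ℝ] κ → ℝ := LinearMap.toContinuousLinearMap (mulVecLin M)
  have hL : HasFDerivAt (fun y => M *ᵥ (y - b)) L x := by
    simp_rw [mulVec_sub]
    exact L.hasFDerivAt.sub_const _
  have hsum : HasFDerivAt (fun y => ∑ j, (M *ᵥ (y - b)) j ^ 2) _ x :=
    HasFDerivAt.fun_sum fun j _ => ((hasFDerivAt_apply j _).comp x hL).pow 2
  rw [hsum.fderiv]
  simp [L, dotProduct, mul_sum, mul_assoc]

theorem integral_comp_mulVec_add [DecidableEq ι] {E : Type*} [NormedAddCommGroup E]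
    [NormedSpace ℝ E] (A : Matrix ι ι ℝ) (hA : A.det ≠ 0) (b : ι → ℝ) (f : (ι → ℝ) → E) :
    ∫ z, f (A *ᵥ z + b) = |A.det|⁻¹ • ∫ x, f x := by
  have hemb : MeasurableEmbedding (toLin' A) :=
    (toLinearEquiv' A (invertibleOfIsUnitDet A (isUnit_iff_ne_zero.2 hA))).toContinuousLinearEquiv
      |>.toHomeomorph.measurableEmbedding
  calc ∫ z, f (A *ᵥ z + b) = ∫ y, f (y + b) ∂(Measure.map (toLin' A) volume) :=
        (hemb.integral_map fun y => f (y + b)).symm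
    _ = |A.det|⁻¹ • ∫ y, f (y + b) := by
        rw [map_matrix_volume_pi_eq_smul_volume_pi hA, integral_smul_measure, abs_inv,
          ENNReal.toReal_ofReal (by positivity)]
    _ = |A.det|⁻¹ • ∫ x, f x := by rw [integral_add_right_eq_self]

end AffineMaps

theorem rpow_neg_div_two_mul_sqrt_pow {x : ℝ} (hx : 0 < x) (n : ℕ) :
    x ^ (-(n : ℝ) / 2) * √x ^ n = 1 := by
  rw [sqrt_eq_rpow, ← rpow_natCast, ← rpow_mul hx.le, ← rpow_add hx]
  ring_nf
  exact rpow_zero x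

section PushforwardGaussian

variable {d : ℕ} {A : Matrix (Fin d) (Fin d) ℝ} (b : Fin d → ℝ)

theorem inv_mulVec_mulVec_add_sub (hA : IsUnit A.det) (z : Fin d → ℝ) :
    A⁻¹ *ᵥ (A *ᵥ z + b - b) = z := by
  rw [add_sub_cancel_right, mulVec_mulVec, nonsing_inv_mul _ hA, one_mulVec]

theorem ρAb_mulVec_add (hA : IsUnit A.det) (z : Fin d → ℝ) :
    ρAb A b (A *ᵥ z + b) = π ^ (-(d : ℝ) / 2) * |A.det|⁻¹ * exp (-∑ i, z i ^ 2) := by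
  rw [ρAb, inv_mulVec_mulVec_add_sub b hA]

theorem integral_mul_ρAb (hA : IsUnit A.det) (f : (Fin d → ℝ) → ℝ) :
    ∫ x, f x * ρAb A b x = π ^ (-(d : ℝ) / 2) * ∫ z, f (A *ᵥ z + b) * exp (-∑ i, z i ^ 2) := by
  have h := integral_comp_mulVec_add A hA.ne_zero b fun x => f x * ρAb A b x
  simp_rw [ρAb_mulVec_add b hA, smul_eq_mul, mul_left_comm (f _), integral_const_mul] at h
  refine mul_left_cancel₀ (inv_ne_zero (abs_ne_zero.2 hA.ne_zero)) ?_
  rw [← h]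
  ring

theorem log_ρAb (hA : IsUnit A.det) (x : Fin d → ℝ) :
    log (ρAb A b x) = log (π ^ (-(d : ℝ) / 2) * |A.det|⁻¹) - ∑ i, (A⁻¹ *ᵥ (x - b)) i ^ 2 := by
  have hdet := hA.ne_zero
  rw [ρAb, log_mul (by positivity) (exp_ne_zero _), log_exp, sub_eq_add_neg]
  rfl

theorem fderiv_log_ρAb_apply_single (hA : IsUnit A.det) (x : Fin d → ℝ) (i : Fin d) :
    fderiv ℝ (fun y => log (ρAb A b y)) x (Pi.single i 1)
      = -2 * (A⁻¹ᵀ *ᵥ (A⁻¹ *ᵥ (x - b))) i := by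
  simp_rw [log_ρAb b hA]
  rw [fderiv_const_sub, _root_.neg_apply, fderiv_sum_sq_mulVec_sub_apply, mulVec_single_one,
    mulVec_transpose, neg_mul]
  rfl

end PushforwardGaussian

theorem total_energy_pushforward_gaussian_general (d : ℕ)
    (A : Matrix (Fin d) (Fin d) ℝ) (hA : IsUnit A.det) (b : Fin d → ℝ) :
    (∫ x : Fin d → ℝ, ((∑ i, x i ^ 2) / 2) * ρAb A b x)
      + (1 / 8) * ∫ x : Fin d → ℝ,
          (∑ i, (fderiv ℝ (fun y => Real.log (ρAb A b y)) x (Pi.single i 1)) ^ 2) * ρAb A b x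
      = (1 / 4) * (Aᵀ * A + (A * Aᵀ)⁻¹).trace + (1 / 2) * (b ⬝ᵥ b) := by
  have hgrad (z : Fin d → ℝ) :
      ∑ i, (fderiv ℝ (fun y => log (ρAb A b y)) (A *ᵥ z + b) (Pi.single i 1)) ^ 2
        = 4 * ∑ i, (A⁻¹ᵀ *ᵥ z + 0) i ^ 2 := by
    simp_rw [fderiv_log_ρAb_apply_single b hA, inv_mulVec_mulVec_add_sub b hA, add_zero, mul_sum]
    exact sum_congr rfl fun i _ => by ring
  have htrace : (A⁻¹ᵀᵀ * A⁻¹ᵀ).trace = ((A * Aᵀ)⁻¹).trace := by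
    rw [transpose_transpose, trace_mul_comm, Matrix.mul_inv_rev, transpose_nonsing_inv]
  rw [integral_mul_ρAb b hA, integral_mul_ρAb b hA]
  simp_rw [hgrad, div_mul_eq_mul_div, mul_assoc (4 : ℝ), integral_div, integral_const_mul,
    integral_sum_sq_mulVec_add_mul_exp_neg_sum_sq, zero_dotProduct, trace_add, htrace,
    Fintype.card_fin]
  linear_combination ((Aᵀ * A).trace / 4 + b ⬝ᵥ b / 2 + ((A * Aᵀ)⁻¹).trace / 4)
    * rpow_neg_div_two_mul_sqrt_pow pi_pos d

/-- The total potential energy of the quantum harmonic oscillator at the pushed-forward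
Gaussian density: `∫ (|x|²/2)ρ_{A,b} + (1/8)∫ |∇ log ρ_{A,b}|² ρ_{A,b}
= (1/4)Tr(AᵀA + (AAᵀ)⁻¹) + (1/2)bᵀb`. -/
theorem total_energy_pushforward_gaussian (d : ℕ) (hd : 1 ≤ d)
    (A : Matrix (Fin d) (Fin d) ℝ) (hA : IsUnit A.det) (b : Fin d → ℝ) :
    (∫ x : Fin d → ℝ, ((∑ i, x i ^ 2) / 2) * ρAb A b x)
      + (1 / 8) * ∫ x : Fin d → ℝ,
          (∑ i, (fderiv ℝ (fun y => Real.log (ρAb A b y)) x (Pi.single i 1)) ^ 2) * ρAb A b x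
      = (1 / 4) * (Aᵀ * A + (A * Aᵀ)⁻¹).trace + (1 / 2) * (b ⬝ᵥ b) :=
  total_energy_pushforward_gaussian_general d A hA b
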